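/- There exists an absolute constant C > 0 with the following property. Let H be a real Hilbert space with closed unit ball B_H, let Θ be a set, and for each θ ∈ Θ let S_θ ⊆ H be a finite-dimensional subspace with orthogonal projection P_θ : H → S_θ; set K = sup_{θ∈Θ} dim(S_θ) < ∞. Let ξ : Θ × B_H → ∪_θ S_θ ∩ B_H be the parametrization ξ(θ, x) = P_θ x, with induced semi-metric d_ξ((θ, x), (θ', x')) = ‖P_θ x − P_{θ'} x'‖_H. Then γ₂(Θ × B_H, d_ξ) ≤ C(√K + γ₂(Θ, d_Fin)), where d_Fin(θ, θ') = ‖P_θ − P_{θ'}‖ is the Finsler semi-metric (operator norm of the difference of projections). -/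

import Mathlib

open MeasureTheory ENNReal

noncomputable section

/-- The subgaussian (`ψ₂`) norm of a real random variable,
`‖X‖_{ψ₂} = inf {C > 0 : E exp(|X|²/C²) ≤ 2}`, valued in `ℝ≥0∞` (with `inf ∅ = ∞`). -/
def psi2Norm {Ω : Type*} [MeasurableSpace Ω] (μ : Measure Ω) (X : Ω → ℝ) : ℝ≥0∞ :=
  sInf {c : ℝ≥0∞ | 0 < c ∧ c ≠ ⊤ ∧ ∫ ω, Real.exp (|X ω| ^ 2 / c.toReal ^ 2) ∂μ ≤ 2}

/-- Talagrand's `γ₂`-functional of a semi-metric `d` on `T`: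
`γ₂(T,d) = inf sup_t Σ_n 2^(n/2) d(t, π n t)`, the infimum being over all sequences of maps
`π n : T → T` whose ranges `T n := range (π n)` form an admissible sequence, i.e.
`|T 0| = 1` and `|T n| ≤ 2^(2^n)`. -/
def gamma2 {T : Type*} (d : T → T → ℝ≥0∞) : ℝ≥0∞ :=
  ⨅ (π : ℕ → T → T) (_ : (Set.range (π 0)).Subsingleton ∧
      ∀ n, (Set.range (π n)).Finite ∧ Nat.card (Set.range (π n)) ≤ 2 ^ 2 ^ n),
    ⨆ t, ∑' n : ℕ, (2 : ℝ≥0∞) ^ ((n : ℝ) / 2) * d t (π n t)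

/-- `Φ : Ω × H → ℝ^m` is a linear, isotropic, subgaussian map on `S ⊆ H` with parameter `α`,
where `Ω = Ω 1 × ⋯ × Ω m` is a product of probability spaces: (a) each `Φ ω` is linear;
(b) each coordinate `[Φ(x)]ᵢ` is an `L²` random variable depending only on the `i`-th
coordinate of `ω`; (c) `E ‖Φ(x)‖₂² = ‖x‖²`; (d) `max_i ‖[Φ(x) - Φ(y)]ᵢ‖_{ψ₂} ≤ √(α/m) ‖x-y‖`
for all `x, y ∈ S ∪ {0}`. -/
def IsSubgaussianMap {H : Type*} [NormedAddCommGroup H] [InnerProductSpace ℝ H]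
    {m : ℕ} {Ω : Fin m → Type*} [∀ i, MeasurableSpace (Ω i)]
    (μ : ∀ i, Measure (Ω i)) [∀ i, IsProbabilityMeasure (μ i)]
    (Φ : (∀ i, Ω i) → H → EuclideanSpace ℝ (Fin m)) (S : Set H) (α : ℝ) : Prop :=
  (∀ ω, IsLinearMap ℝ (Φ ω)) ∧
  (∀ x ∈ S, ∀ i : Fin m, ∃ f : Ω i → ℝ, MemLp f 2 (μ i) ∧ ∀ ω, Φ ω x i = f (ω i)) ∧
  (∀ x ∈ S, ∫ ω, ‖Φ ω x‖ ^ 2 ∂(Measure.pi μ) = ‖x‖ ^ 2) ∧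
  (∀ x ∈ S ∪ {0}, ∀ y ∈ S ∪ {0}, ∀ i : Fin m,
    psi2Norm (Measure.pi μ) (fun ω => Φ ω x i - Φ ω y i)
      ≤ ENNReal.ofReal (Real.sqrt (α / m) * ‖x - y‖))

/-- The orthogonal projection onto a finite-dimensional subspace `S` of a real Hilbert
space, viewed as a continuous linear map `H →L[ℝ] H`. -/
def projCLM {H : Type*} [NormedAddCommGroup H] [InnerProductSpace ℝ H] [CompleteSpace H]
    (S : Submodule ℝ H) [FiniteDimensional ℝ S] : H →L[ℝ] H :=
  S.subtypeL.comp (Submodule.orthogonalProjection S)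

/-!
Chaining through `Θ`. Fix an admissible sequence `π` for `(Θ, d_Fin)` and, at level `n`, an
`εₙ`-net of the unit ball of every `S θ`, with `εₙ = 3 · 2^(-2^n/K)`: a volume argument bounds
its size by `(3/εₙ)^K = 2^(2^n)`. Sending `(θ, x)` to `π n θ` together with the net point of
`P_{π n θ} x` gives, after shifting the index by one, an admissible sequence on `Θ × B_H` whose
error at level `n + 1` is at most `‖P_θ - P_{π n θ}‖ + εₙ`. The first part sums to
`γ₂(Θ, d_Fin)`; the second to `O(√K)`, as `2^(n/2) εₙ` grows geometrically until `2^n ≈ K` and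
decays geometrically afterwards.
-/

open Set Metric Module

section Gamma2

variable {T : Type*}

def IsAdmissibleSeq (π : ℕ → T → T) : Prop :=
  (range (π 0)).Subsingleton ∧ ∀ n, (range (π n)).Finite ∧ Nat.card (range (π n)) ≤ 2 ^ 2 ^ n

theorem Set.Subsingleton.natCard_le_one {s : Set T} (hs : s.Subsingleton) : Nat.card s ≤ 1 := by
  have := hs.finite.to_subtype
  exact Finite.card_le_one_iff_subsingleton.mpr hs.coe_sort

theorem isAdmissibleSeq_of_subsingleton {π : ℕ → T → T} (h : ∀ n, (range (π n)).Subsingleton) :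
    IsAdmissibleSeq π :=
  ⟨h 0, fun n => ⟨(h n).finite, (h n).natCard_le_one.trans Nat.one_le_two_pow⟩⟩

theorem exists_isAdmissibleSeq (T : Type*) : ∃ π : ℕ → T → T, IsAdmissibleSeq π :=
  -- `Classical.choice ⟨t⟩` does not depend on `t` (proof irrelevance), and needs no point of `T`
  -- up front.
  ⟨fun _ t => Classical.choice ⟨t⟩, isAdmissibleSeq_of_subsingleton fun _ => by
    rintro _ ⟨_, rfl⟩ _ ⟨_, rfl⟩; rfl⟩

variable {d : T → T → ℝ≥0∞}

theorem gamma2_le_iSup_tsum {π : ℕ → T → T} (hπ : IsAdmissibleSeq π) :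
    gamma2 d ≤ ⨆ t, ∑' n : ℕ, (2 : ℝ≥0∞) ^ ((n : ℝ) / 2) * d t (π n t) :=
  iInf₂_le π hπ

theorem gamma2_eq_zero_of_forall_eq_zero (h : ∀ s t, d s t = 0) : gamma2 d = 0 := by
  obtain ⟨π, hπ⟩ := exists_isAdmissibleSeq T
  exact le_antisymm ((gamma2_le_iSup_tsum hπ).trans (by simp [h])) bot_le

theorem le_add_two_mul_gamma2 {x a : ℝ≥0∞} (h : ∀ π, IsAdmissibleSeq π →
      x ≤ a + 2 * ⨆ t, ∑' n : ℕ, (2 : ℝ≥0∞) ^ ((n : ℝ) / 2) * d t (π n t)) :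
    x ≤ a + 2 * gamma2 d := by
  simp only [gamma2, ENNReal.mul_iInf_of_ne two_ne_zero ofNat_ne_top, ENNReal.add_iInf]
  exact le_iInf₂ h

theorem tsum_two_rpow_mul_le_of_succ_le {f g : ℕ → ℝ≥0∞} (h : ∀ n, f (n + 1) ≤ g n) :
    ∑' n : ℕ, (2 : ℝ≥0∞) ^ ((n : ℝ) / 2) * f n ≤
      f 0 + 2 * ∑' n : ℕ, (2 : ℝ≥0∞) ^ ((n : ℝ) / 2) * g n := by
  rw [tsum_eq_zero_add' ENNReal.summable, ← ENNReal.tsum_mul_left]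
  refine add_le_add (by simp) (ENNReal.tsum_le_tsum fun n => ?_)
  have h_sqrt_two : (2 : ℝ≥0∞) ^ ((1 : ℝ) / 2) ≤ 2 := by
    simpa using ENNReal.rpow_le_rpow_of_exponent_le one_le_two (by norm_num : (1 : ℝ) / 2 ≤ 1)
  calc (2 : ℝ≥0∞) ^ (((n + 1 : ℕ) : ℝ) / 2) * f (n + 1)
      = 2 ^ ((1 : ℝ) / 2) * (2 ^ ((n : ℝ) / 2) * f (n + 1)) := by
        rw [← mul_assoc, ← ENNReal.rpow_add _ _ two_ne_zero ofNat_ne_top]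
        push_cast; ring_nf
    _ ≤ 2 * (2 ^ ((n : ℝ) / 2) * g n) := by gcongr; exact h n

end Gamma2

section Chain

variable {Θ B : Type*}

-- The shift of index makes level `n + 1` a union of `#(range (π n)) ≤ 2^(2^n)` ranges of size
-- `≤ 2^(2^n)`, hence of size `≤ 2^(2^(n+1))`.
def chainSeq (π : ℕ → Θ → Θ) (ρ : Θ → ℕ → B → B) (b₀ : B) : ℕ → Θ × B → Θ × B
  | 0, t => (π 0 t.1, b₀)
  | n + 1, t => (π n t.1, ρ (π n t.1) n t.2)

theorem isAdmissibleSeq_chainSeq {π : ℕ → Θ → Θ} (hπ : IsAdmissibleSeq π) {ρ : Θ → ℕ → B → B}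
    (hρ : ∀ θ n, (range (ρ θ n)).Finite ∧ Nat.card (range (ρ θ n)) ≤ 2 ^ 2 ^ n) (b₀ : B) :
    IsAdmissibleSeq (chainSeq π ρ b₀) := by
  have h_zero : (range (chainSeq π ρ b₀ 0)).Subsingleton := by
    refine (hπ.1.image (·, b₀)).anti ?_
    rintro _ ⟨t, rfl⟩
    exact ⟨_, mem_range_self t.1, rfl⟩
  refine ⟨h_zero, ?_⟩
  rintro (_ | n)
  · exact ⟨h_zero.finite, h_zero.natCard_le_one.trans Nat.one_le_two_pow⟩
  · classical
    set s := (hπ.2 n).1.toFinset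
    have h_succ : range (chainSeq π ρ b₀ (n + 1)) ⊆ ⋃ θ ∈ s, Prod.mk θ '' range (ρ θ n) := by
      rintro _ ⟨t, rfl⟩
      exact mem_biUnion (by simp [s]) (mem_image_of_mem _ (mem_range_self _))
    have h_fin : (⋃ θ ∈ s, Prod.mk θ '' range (ρ θ n)).Finite :=
      s.finite_toSet.biUnion fun θ _ => (hρ θ n).1.image _
    refine ⟨h_fin.subset h_succ, ?_⟩
    rw [Nat.card_coe_set_eq]
    calc (range (chainSeq π ρ b₀ (n + 1))).ncard
        ≤ (⋃ θ ∈ s, Prod.mk θ '' range (ρ θ n)).ncard := ncard_le_ncard h_succ h_fin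
      _ ≤ ∑ θ ∈ s, (Prod.mk θ '' range (ρ θ n)).ncard := s.set_ncard_biUnion_le _
      _ ≤ s.card * 2 ^ 2 ^ n := by
        refine Finset.sum_le_card_nsmul _ _ _ fun θ _ => ?_
        exact (ncard_image_le (hρ θ n).1).trans ((Nat.card_coe_set_eq _).symm.trans_le (hρ θ n).2)
      _ ≤ 2 ^ 2 ^ n * 2 ^ 2 ^ n := by
        gcongr
        rw [← ncard_eq_toFinset_card _ (hπ.2 n).1, ← Nat.card_coe_set_eq]
        exact (hπ.2 n).2
      _ = 2 ^ 2 ^ (n + 1) := by rw [← pow_add, ← two_mul, pow_succ']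

end Chain

section Packing

variable {E : Type*} [NormedAddCommGroup E] [NormedSpace ℝ E] [FiniteDimensional ℝ E]

theorem Finset.card_le_of_isSeparated_of_subset_closedBall {ε : ℝ} (hε : 0 < ε) {s : Finset E}
    (hs : IsSeparated (ENNReal.ofReal ε) (s : Set E)) (hsub : (s : Set E) ⊆ closedBall 0 1) :
    (s.card : ℝ) ≤ (1 + 2 / ε) ^ finrank ℝ E := by
  borelize E
  set μ : Measure E := Measure.addHaar
  have h_disj : (s : Set E).PairwiseDisjoint fun a => ball a (ε / 2) := by
    intro a ha b hb hab
    refine ball_disjoint_ball ?_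
    have : ENNReal.ofReal ε < edist a b := hs ha hb hab
    rw [edist_dist, ENNReal.ofReal_lt_ofReal_iff_of_nonneg hε.le] at this
    linarith
  have h_union : (⋃ a ∈ s, ball a (ε / 2)) ⊆ ball 0 (1 + ε / 2) := by
    refine iUnion₂_subset fun a ha => ball_subset_ball' ?_
    rw [dist_zero_right]
    linarith [mem_closedBall_zero_iff.mp (hsub ha)]
  have h_vol : (s.card : ℝ≥0∞) * ENNReal.ofReal ((ε / 2) ^ finrank ℝ E) * μ (ball 0 1) ≤
      ENNReal.ofReal ((1 + ε / 2) ^ finrank ℝ E) * μ (ball 0 1) := by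
    calc (s.card : ℝ≥0∞) * ENNReal.ofReal ((ε / 2) ^ finrank ℝ E) * μ (ball 0 1)
        = ∑ a ∈ s, μ (ball a (ε / 2)) := by
          simp [μ, Measure.addHaar_ball_of_pos _ _ (half_pos hε), mul_assoc]
      _ = μ (⋃ a ∈ s, ball a (ε / 2)) :=
          (measure_biUnion_finset h_disj fun _ _ => measurableSet_ball).symm
      _ ≤ μ (ball 0 (1 + ε / 2)) := measure_mono h_union
      _ = _ := Measure.addHaar_ball_of_pos _ _ (by positivity)
  rw [ENNReal.mul_le_mul_iff_left (measure_ball_pos μ 0 one_pos).ne' measure_ball_lt_top.ne,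
    ← ENNReal.ofReal_natCast, ← ENNReal.ofReal_mul (by positivity),
    ENNReal.ofReal_le_ofReal_iff (by positivity), ← le_div_iff₀ (by positivity), ← div_pow] at h_vol
  refine h_vol.trans_eq (congrArg (· ^ _) ?_)
  field_simp
  ring

theorem packingNumber_closedBall_le {ε : ℝ} (hε : 0 < ε) :
    packingNumber ε.toNNReal (closedBall (0 : E) 1) ≤ ⌊(1 + 2 / ε) ^ finrank ℝ E⌋₊ := by
  refine iSup₂_le fun C hC => iSup_le fun hsep => ?_
  have h_card : ∀ t : Finset E, (t : Set E) ⊆ C → t.card ≤ ⌊(1 + 2 / ε) ^ finrank ℝ E⌋₊ :=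
    fun t ht => Nat.le_floor <|
      t.card_le_of_isSeparated_of_subset_closedBall hε (hsep.subset ht) (ht.trans hC)
  rcases C.finite_or_infinite with hfin | hinf
  · rw [← hfin.coe_toFinset, encard_coe_eq_coe_finsetCard]
    exact_mod_cast h_card _ (by simp)
  · obtain ⟨t, ht, hcard⟩ := hinf.exists_subset_card_eq (⌊(1 + 2 / ε) ^ finrank ℝ E⌋₊ + 1)
    exact absurd (h_card t ht) (by omega)

theorem exists_finite_net_closedBall {ε : ℝ} (hε : 0 < ε) :
    ∃ N ⊆ closedBall (0 : E) 1, N.Finite ∧ (Nat.card N : ℝ) ≤ max 1 ((3 / ε) ^ finrank ℝ E) ∧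
      ∀ x ∈ closedBall (0 : E) 1, ∃ y ∈ N, dist x y ≤ ε := by
  rcases le_or_gt 1 ε with h1 | h1
  · refine ⟨{0}, by simp, finite_singleton 0, by simp, fun x hx => ⟨0, rfl, ?_⟩⟩
    exact (mem_closedBall.mp hx).trans h1
  set N := maximalSeparatedSet ε.toNNReal (closedBall (0 : E) 1)
  have h_pack := packingNumber_closedBall_le (E := E) hε
  have h_top : packingNumber ε.toNNReal (closedBall (0 : E) 1) ≠ ⊤ :=
    ne_top_of_le_ne_top (ENat.natCast_ne_top _) h_pack
  have h_fin : N.Finite := encard_ne_top_iff.mp (encard_maximalSeparatedSet h_top ▸ h_top)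
  refine ⟨N, maximalSeparatedSet_subset, h_fin, ?_, fun x hx => ?_⟩
  · have h_ncard : N.ncard ≤ ⌊(1 + 2 / ε) ^ finrank ℝ E⌋₊ := by
      rw [← ENat.natCast_le_natCast, h_fin.cast_ncard_eq, encard_maximalSeparatedSet h_top]
      exact h_pack
    calc (Nat.card N : ℝ) = N.ncard := by rw [Nat.card_coe_set_eq]
      _ ≤ (1 + 2 / ε) ^ finrank ℝ E :=
        (Nat.cast_le.mpr h_ncard).trans (Nat.floor_le (by positivity))
      _ ≤ (3 / ε) ^ finrank ℝ E := by
        gcongr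
        rw [le_div_iff₀ hε, add_mul, div_mul_cancel₀ _ hε.ne']
        linarith
      _ ≤ _ := le_max_right _ _
  · obtain ⟨y, hy, hxy⟩ := isCover_maximalSeparatedSet h_top hx
    refine ⟨y, hy, ?_⟩
    rw [← ENNReal.ofReal_le_ofReal_iff hε.le, ← edist_dist]
    exact hxy

end Packing

theorem ContinuousLinearMap.edist_apply_le_of_norm_le_one {E F : Type*} [SeminormedAddCommGroup E]
    [SeminormedAddCommGroup F] [NormedSpace ℝ E] [NormedSpace ℝ F] (A B : E →L[ℝ] F) {x : E}
    (hx : ‖x‖ ≤ 1) : edist (A x) (B x) ≤ edist A B := by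
  rw [edist_dist, edist_dist, dist_eq_norm, dist_eq_norm, ← sub_apply]
  exact ENNReal.ofReal_le_ofReal ((A - B).le_of_opNorm_le_of_le le_rfl hx |>.trans_eq (mul_one _))

section Projection

variable {H : Type*} [NormedAddCommGroup H] [InnerProductSpace ℝ H] [CompleteSpace H]
  (S : Submodule ℝ H) [FiniteDimensional ℝ S]

theorem projCLM_eq_zero_of_finrank_eq_zero (h : finrank ℝ S = 0) : projCLM S = 0 := by
  obtain rfl := Submodule.finrank_eq_zero.mp h
  ext x
  exact (Submodule.mem_bot ℝ).mp ((⊥ : Submodule ℝ H).starProjection_apply_mem x)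

theorem norm_projCLM_apply_le (x : H) : ‖projCLM S x‖ ≤ ‖x‖ :=
  S.norm_starProjection_apply_le x

theorem projCLM_apply_of_mem {x : H} (hx : x ∈ S) : projCLM S x = x :=
  Submodule.starProjection_eq_self_iff.mpr hx

theorem exists_projCLM_net {ε : ℝ} (hε : 0 < ε) :
    ∃ ρ : closedBall (0 : H) 1 → closedBall (0 : H) 1, (range ρ).Finite ∧
      (Nat.card (range ρ) : ℝ) ≤ max 1 ((3 / ε) ^ finrank ℝ S) ∧
      ∀ x : closedBall (0 : H) 1, dist (projCLM S x) (projCLM S (ρ x)) ≤ ε := by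
  obtain ⟨N, hN_ball, hN_fin, hN_card, hN_cover⟩ := exists_finite_net_closedBall (E := S) hε
  have h_proj (x : closedBall (0 : H) 1) :
      (⟨projCLM S x, S.starProjection_apply_mem x⟩ : S) ∈ closedBall 0 1 :=
    mem_closedBall_zero_iff.mpr ((norm_projCLM_apply_le S x).trans (mem_closedBall_zero_iff.mp x.2))
  choose y hyN hy using fun x => hN_cover _ (h_proj x)
  have := hN_fin.to_subtype
  let ι : N → closedBall (0 : H) 1 := fun z => ⟨z.1, mem_closedBall_zero_iff.mpr
    (mem_closedBall_zero_iff.mp (hN_ball z.2))⟩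
  have h_range : range (fun x => ι ⟨y x, hyN x⟩) ⊆ range ι := range_comp_subset_range _ ι
  refine ⟨_, (finite_range ι).subset h_range, ?_, fun x => ?_⟩
  · calc (Nat.card (range fun x => ι ⟨y x, hyN x⟩) : ℝ) ≤ Nat.card N := by
          exact_mod_cast (Nat.card_mono (finite_range ι) h_range).trans (Finite.card_range_le ι)
      _ ≤ _ := hN_card
  · rw [projCLM_apply_of_mem S (y x).2]
    exact hy x

end Projection

section Scale

-- The radius at which a net of the unit ball of a `K`-dimensional space has `(3/ε)^K = 2^(2^n)`
-- points.
def chainScale (K n : ℕ) : ℝ := 3 * 2 ^ (-((2 : ℝ) ^ n / K))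

theorem chainScale_pos (K n : ℕ) : 0 < chainScale K n := by
  unfold chainScale; positivity

theorem max_one_three_div_chainScale_pow_le {K d : ℕ} (hK : K ≠ 0) (hd : d ≤ K) (n : ℕ) :
    max 1 ((3 / chainScale K n) ^ d) ≤ 2 ^ 2 ^ n := by
  have h_base : 3 / chainScale K n = 2 ^ ((2 : ℝ) ^ n / K) := by
    rw [chainScale, Real.rpow_neg zero_le_two]
    field_simp
  have h_one : 1 ≤ (2 : ℝ) ^ ((2 : ℝ) ^ n / K) := Real.one_le_rpow one_le_two (by positivity)
  have h_pow_K : ((2 : ℝ) ^ ((2 : ℝ) ^ n / K)) ^ K = 2 ^ 2 ^ n := by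
    rw [← Real.rpow_natCast, ← Real.rpow_mul zero_le_two, div_mul_cancel₀ _ (by exact_mod_cast hK)]
    norm_cast
  rw [h_base, ← h_pow_K]
  exact max_le (one_le_pow₀ h_one) (pow_le_pow_right₀ h_one hd)

theorem ENNReal.two_rpow_natCast_div_two (n : ℕ) :
    (2 : ℝ≥0∞) ^ ((n : ℝ) / 2) = ENNReal.ofReal (√2 ^ n) := by
  rw [← ENNReal.ofReal_ofNat, ENNReal.ofReal_rpow_of_pos two_pos,
    Real.rpow_div_two_eq_sqrt _ zero_le_two, Real.rpow_natCast]

theorem tsum_two_rpow_mul_chainScale_le {K : ℕ} (hK : K ≠ 0) :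
    ∑' n : ℕ, (2 : ℝ≥0∞) ^ ((n : ℝ) / 2) * ENNReal.ofReal (chainScale K n) ≤
      ENNReal.ofReal (27 * √K) := by
  set c := √(2 : ℝ)
  have hc_sq : c ^ 2 = 2 := Real.sq_sqrt zero_le_two
  have hc_lo : 7 / 5 < c := Real.lt_sqrt_of_sq_lt (by norm_num)
  have hc_hi : c < 3 / 2 := (Real.sqrt_lt' (by norm_num)).mpr (by norm_num)
  -- `2 ^ L` is the first power of two above `K`: the terms grow like `c ^ n` below `L` and
  -- decay like `c ^ (-i)` above it.
  set L := Nat.log 2 K + 1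
  have hK_lt : (K : ℝ) < 2 ^ L := by exact_mod_cast Nat.lt_pow_succ_log_self one_lt_two K
  have hL_le : c ^ L ≤ c * √K := by
    have : (2 : ℝ) ^ L ≤ 2 * K := by
      rw [pow_succ']; gcongr; exact_mod_cast Nat.pow_log_le_self 2 hK
    refine le_of_sq_le_sq ?_ (by positivity)
    rw [← pow_mul, mul_comm, pow_mul, hc_sq, mul_pow, hc_sq, Real.sq_sqrt (Nat.cast_nonneg K)]
    exact this
  set u : ℕ → ℝ := fun n => c ^ n * chainScale K n
  have h_term (n : ℕ) :
      (2 : ℝ≥0∞) ^ ((n : ℝ) / 2) * ENNReal.ofReal (chainScale K n) = ENNReal.ofReal (u n) := by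
    rw [ENNReal.two_rpow_natCast_div_two, ← ENNReal.ofReal_mul (by positivity)]
  have h_head (n : ℕ) : u n ≤ 3 * c ^ n := by
    have : (2 : ℝ) ^ (-((2 : ℝ) ^ n / K)) ≤ 1 := Real.rpow_le_one_of_one_le_of_nonpos one_le_two
      (by simp only [neg_nonpos]; positivity)
    simp only [u, chainScale]
    nlinarith [pow_pos (by positivity : (0 : ℝ) < c) n]
  have h_tail (i : ℕ) : u (i + L) ≤ 3 * c ^ L * c⁻¹ ^ i := by
    have h_exp : (2 : ℝ) ^ (-((2 : ℝ) ^ (i + L) / K)) ≤ 2⁻¹ ^ i := by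
      rw [inv_pow, ← Real.rpow_natCast 2 i, ← Real.rpow_neg zero_le_two]
      refine Real.rpow_le_rpow_of_exponent_le one_le_two (neg_le_neg ?_)
      rw [le_div_iff₀ (by exact_mod_cast Nat.pos_of_ne_zero hK), pow_add]
      have : (i : ℝ) ≤ 2 ^ i := by exact_mod_cast (Nat.lt_two_pow_self).le
      gcongr
    have h_ratio : c * 2⁻¹ = c⁻¹ := by field_simp; linarith
    calc u (i + L) ≤ c ^ (i + L) * (3 * 2⁻¹ ^ i) := by
          simp only [u, chainScale]; gcongr
      _ = 3 * c ^ L * c⁻¹ ^ i := by rw [← h_ratio, mul_pow, pow_add]; ring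
  have h_sum_head : ∑ n ∈ Finset.range L, 3 * c ^ n ≤ 3 * c ^ L * (c + 1) := by
    have h_geom := geom_sum_mul c L
    -- `(c - 1) (c + 1) = 1` turns the geometric sum `(c^L - 1) / (c - 1)` into `(c^L - 1) (c + 1)`.
    have : (c - 1) * (c + 1) = 1 := by nlinarith
    rw [← Finset.mul_sum]
    nlinarith [pow_pos (by positivity : (0 : ℝ) < c) L]
  have h_sum_tail : ∑' i : ℕ, 3 * c ^ L * c⁻¹ ^ i = 3 * c ^ L * (c + 2) := by
    rw [tsum_mul_left,
      tsum_geometric_of_lt_one (by positivity) (inv_lt_one_of_one_lt₀ (by linarith))]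
    have : c - 1 ≠ 0 := by linarith
    congr 1
    field_simp
    linear_combination -hc_sq
  calc ∑' n : ℕ, (2 : ℝ≥0∞) ^ ((n : ℝ) / 2) * ENNReal.ofReal (chainScale K n)
      = ∑ n ∈ Finset.range L, ENNReal.ofReal (u n) + ∑' i, ENNReal.ofReal (u (i + L)) := by
        rw [tsum_congr h_term, ENNReal.summable.sum_add_tsum_nat_add']
    _ ≤ ENNReal.ofReal (∑ n ∈ Finset.range L, 3 * c ^ n) +
          ENNReal.ofReal (∑' i : ℕ, 3 * c ^ L * c⁻¹ ^ i) := by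
        rw [ENNReal.ofReal_sum_of_nonneg (fun _ _ => by positivity),
          ENNReal.ofReal_tsum_of_nonneg (fun _ => by positivity)
            ((summable_geometric_of_lt_one (by positivity)
              (inv_lt_one_of_one_lt₀ (by linarith))).mul_left _)]
        gcongr with n _ i
        · exact h_head n
        · exact h_tail i
    _ ≤ ENNReal.ofReal (27 * √K) := by
        rw [← ENNReal.ofReal_add (by positivity) (by positivity), h_sum_tail]
        refine ENNReal.ofReal_le_ofReal ?_
        nlinarith [Real.sqrt_nonneg (K : ℝ)]

end Scale

section UnionOfSubspaces

variable {H : Type*} [NormedAddCommGroup H] [InnerProductSpace ℝ H] [CompleteSpace H]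
  {Θ : Type*} (S : Θ → Submodule ℝ H) [∀ θ, FiniteDimensional ℝ (S θ)]

-- The semi-metric `d_ξ` of the parametrization `ξ(θ, x) = P_θ x`.
def paramDist (p q : Θ × closedBall (0 : H) 1) : ℝ≥0∞ :=
  edist (projCLM (S p.1) p.2) (projCLM (S q.1) q.2)

def finslerDist (θ θ' : Θ) : ℝ≥0∞ :=
  edist (projCLM (S θ)) (projCLM (S θ'))

theorem paramDist_eq_zero_of_finrank_eq_zero (hdim : ∀ θ, finrank ℝ (S θ) = 0)
    (p q : Θ × closedBall (0 : H) 1) : paramDist S p q = 0 := by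
  simp [paramDist, projCLM_eq_zero_of_finrank_eq_zero _ (hdim _)]

theorem paramDist_le_finslerDist_add (θ θ' : Θ) (x y : closedBall (0 : H) 1) :
    paramDist S (θ, x) (θ', y) ≤
      finslerDist S θ θ' + edist (projCLM (S θ') x) (projCLM (S θ') y) :=
  (edist_triangle _ _ _).trans <| add_le_add
    ((projCLM (S θ)).edist_apply_le_of_norm_le_one _ (mem_closedBall_zero_iff.mp x.2)) le_rfl

theorem tsum_paramDist_chainSeq_le (π : ℕ → Θ → Θ)
    {ρ : Θ → ℕ → closedBall (0 : H) 1 → closedBall (0 : H) 1} {ε : ℕ → ℝ}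
    (hρ : ∀ θ n (x : closedBall (0 : H) 1), dist (projCLM (S θ) x) (projCLM (S θ) (ρ θ n x)) ≤ ε n)
    (t : Θ × closedBall (0 : H) 1) :
    ∑' n : ℕ, (2 : ℝ≥0∞) ^ ((n : ℝ) / 2) *
        paramDist S t (chainSeq π ρ ⟨0, mem_closedBall_self zero_le_one⟩ n t) ≤
      1 + 2 * ∑' n : ℕ, (2 : ℝ≥0∞) ^ ((n : ℝ) / 2) *
        (finslerDist S t.1 (π n t.1) + ENNReal.ofReal (ε n)) := by
  refine (tsum_two_rpow_mul_le_of_succ_le fun n => ?_).trans (add_le_add_left ?_ _)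
  · refine (paramDist_le_finslerDist_add S _ _ _ _).trans (add_le_add le_rfl ?_)
    rw [edist_dist]
    exact ENNReal.ofReal_le_ofReal (hρ _ n t.2)
  · simp only [chainSeq, paramDist, map_zero, edist_zero_right]
    rw [← ofReal_norm]
    exact ENNReal.ofReal_le_one.mpr
      ((norm_projCLM_apply_le _ _).trans (mem_closedBall_zero_iff.mp t.2.2))

theorem gamma2_paramDist_le {π : ℕ → Θ → Θ} (hπ : IsAdmissibleSeq π) {K : ℕ} (hK : K ≠ 0)
    (hdim : ∀ θ, finrank ℝ (S θ) ≤ K) :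
    gamma2 (paramDist S) ≤ ENNReal.ofReal (1 + 54 * √K) +
      2 * ⨆ θ, ∑' n : ℕ, (2 : ℝ≥0∞) ^ ((n : ℝ) / 2) * finslerDist S θ (π n θ) := by
  choose ρ hρ_fin hρ_card hρ_dist using fun θ n => exists_projCLM_net (S θ) (chainScale_pos K n)
  have hρ (θ : Θ) (n : ℕ) : (range (ρ θ n)).Finite ∧ Nat.card (range (ρ θ n)) ≤ 2 ^ 2 ^ n :=
    ⟨hρ_fin θ n, by
      exact_mod_cast (hρ_card θ n).trans (max_one_three_div_chainScale_pow_le hK (hdim θ) n)⟩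
  refine (gamma2_le_iSup_tsum
      (isAdmissibleSeq_chainSeq hπ hρ ⟨0, mem_closedBall_self zero_le_one⟩)).trans
    (iSup_le fun t => (tsum_paramDist_chainSeq_le S π hρ_dist t).trans ?_)
  calc 1 + 2 * ∑' n : ℕ, (2 : ℝ≥0∞) ^ ((n : ℝ) / 2) *
        (finslerDist S t.1 (π n t.1) + ENNReal.ofReal (chainScale K n))
      ≤ 1 + 2 * ((⨆ θ, ∑' n : ℕ, (2 : ℝ≥0∞) ^ ((n : ℝ) / 2) * finslerDist S θ (π n θ)) +
          ENNReal.ofReal (27 * √K)) := by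
        simp only [mul_add, ENNReal.tsum_add]
        gcongr
        · exact le_iSup (fun θ => ∑' n : ℕ, (2 : ℝ≥0∞) ^ ((n : ℝ) / 2) * finslerDist S θ (π n θ))
            t.1
        · exact tsum_two_rpow_mul_chainScale_le hK
    _ = _ := by
        rw [ENNReal.ofReal_add zero_le_one (by positivity), ENNReal.ofReal_one,
          show (54 : ℝ) * √K = 2 * (27 * √K) by ring, ENNReal.ofReal_mul zero_le_two,
          ENNReal.ofReal_ofNat]
        ring

end UnionOfSubspaces

/-- **`γ₂`-estimate for an infinite union of subspaces** (Lemma 6.1). There is an absolute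
constant `C > 0` such that for any family `(S θ)_{θ ∈ Θ}` of finite-dimensional subspaces of
a real Hilbert space `H` with `dim S θ ≤ K`, the parametrization `ξ(θ, x) = P_θ x` of
`(∪_θ S θ) ∩ B_H` by `Θ × B_H` satisfies
`γ₂(Θ × B_H, d_ξ) ≤ C (√K + γ₂(Θ, d_Fin))`, where `d_Fin(θ, θ') = ‖P_θ - P_θ'‖`. -/
theorem gamma2_union_subspaces :
    ∃ C : ℝ, 0 < C ∧
      ∀ (H : Type) [NormedAddCommGroup H] [InnerProductSpace ℝ H] [CompleteSpace H]
        (Θ : Type) (S : Θ → Submodule ℝ H) [∀ θ, FiniteDimensional ℝ (S θ)] (K : ℕ),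
        (∀ θ, Module.finrank ℝ (S θ) ≤ K) →
        gamma2 (fun p q : Θ × (Metric.closedBall (0 : H) 1) =>
            edist (projCLM (S p.1) (p.2 : H)) (projCLM (S q.1) (q.2 : H))) ≤
          ENNReal.ofReal C *
            (ENNReal.ofReal (Real.sqrt K) +
              gamma2 fun θ θ' : Θ => edist (projCLM (S θ)) (projCLM (S θ'))) := by
  refine ⟨55, by norm_num, fun H _ _ _ Θ S _ K hdim => ?_⟩
  change gamma2 (paramDist S) ≤ ENNReal.ofReal 55 * (ENNReal.ofReal √K + gamma2 (finslerDist S))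
  rcases eq_or_ne K 0 with rfl | hK
  · rw [gamma2_eq_zero_of_forall_eq_zero
      (paramDist_eq_zero_of_finrank_eq_zero S fun θ => Nat.le_zero.mp (hdim θ))]
    exact zero_le
  have h_sqrt : 1 ≤ √(K : ℝ) := Real.one_le_sqrt.mpr (Nat.one_le_cast.mpr (Nat.pos_of_ne_zero hK))
  calc gamma2 (paramDist S) ≤ ENNReal.ofReal (1 + 54 * √K) + 2 * gamma2 (finslerDist S) :=
        le_add_two_mul_gamma2 fun π hπ => gamma2_paramDist_le S hπ hK hdim
    _ ≤ ENNReal.ofReal 55 * (ENNReal.ofReal √K + gamma2 (finslerDist S)) := by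
        rw [mul_add, ← ENNReal.ofReal_mul (by norm_num), ENNReal.ofReal_ofNat]
        gcongr
        · linarith
        · norm_num
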